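/- There exists D₀ ∈ ℕ depending only on α, d and 𝐝 such that for every power of two D ≥ D₀, every anisotropic D-adic cube I ∈ 𝒟_s with s < 0, and every real polynomial Q on ℝ^𝐝 of degree at most d: ‖Q‖_{Î} ≥ 10⁴ ‖Q‖_I, where Î is the unique D-adic cube of scale s+1 containing I. -/

import Mathlib

open MeasureTheory Set
open scoped ENNReal NNReal BigOperators

noncomputable section

/-- Anisotropic dilation `δ_r`. -/
def dil {dd : ℕ} (α : Fin dd → ℕ) (r : ℝ) (x : Fin dd → ℝ) : Fin dd → ℝ :=
  fun i => r ^ (α i) * x i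

/-- An anisotropic `D`-adic cube, given by its scale `s` and position `k`. -/
structure DCube (dd : ℕ) where
  s : ℤ
  k : Fin dd → ℤ

/-- The cube `x + δ_{D^s}([0,1)^dd)` with `x = δ_{D^s}(k)`, as a subset of `ℝ^dd`. -/
def DCube.toSet {dd : ℕ} (α : Fin dd → ℕ) (D : ℕ) (J : DCube dd) : Set (Fin dd → ℝ) :=
  {x | ∀ i, (D : ℝ) ^ (J.s * (α i : ℤ)) * J.k i ≤ x i ∧
            x i < (D : ℝ) ^ (J.s * (α i : ℤ)) * (J.k i + 1)}

/-- Membership in the grid `𝒟`: nonpositive scale and base point in `[0,1)^dd`. -/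
def DCube.valid {dd : ℕ} (α : Fin dd → ℕ) (D : ℕ) (J : DCube dd) : Prop :=
  J.s ≤ 0 ∧ ∀ i, 0 ≤ J.k i ∧ (D : ℝ) ^ (J.s * (α i : ℤ)) * J.k i < 1

/-- `‖Q‖_I`. -/
def qnorm {dd : ℕ} (Q : MvPolynomial (Fin dd) ℝ) (I : Set (Fin dd → ℝ)) : ℝ :=
  ⨆ x ∈ I, ⨆ y ∈ I, |MvPolynomial.eval x Q - MvPolynomial.eval y Q|

/-!
Rescale `Î` affinely onto the unit cube `[0,1)^𝐝`. This turns `Q` into a polynomial `R` of the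
same degree with `‖R‖_{[0,1)^𝐝} ≤ ‖Q‖_Î`, and turns `I` into a set of sup-diameter at most `D⁻¹`,
because every exponent `αᵢ` is at least `1`. On the finite-dimensional space of polynomials of
degree at most `d`, the Lipschitz constant on the unit cube vanishes wherever the oscillation
does, so it is bounded by `C` times the oscillation, with `C` depending only on `𝐝` and `d`.
Hence `‖Q‖_I ≤ C D⁻¹ ‖Q‖_Î`, and `D₀ = 10⁴ C` works.
-/

open MvPolynomial Bornology

theorem LinearMap.exists_bound_of_ker_le {𝕜 E F G : Type*} [NontriviallyNormedField 𝕜]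
    [CompleteSpace 𝕜] [AddCommGroup E] [Module 𝕜 E] [FiniteDimensional 𝕜 E]
    [NormedAddCommGroup F] [NormedSpace 𝕜 F] [NormedAddCommGroup G] [NormedSpace 𝕜 G]
    (A : E →ₗ[𝕜] F) (B : E →ₗ[𝕜] G) (h : ker A ≤ ker B) :
    ∃ C ≥ 0, ∀ x, ‖B x‖ ≤ C * ‖A x‖ := by
  let B' : range A →L[𝕜] G :=
    LinearMap.toContinuousLinearMap ((ker A).liftQ B h ∘ₗ A.quotKerEquivRange.symm.toLinearMap)
  refine ⟨‖B'‖, norm_nonneg _, fun x => ?_⟩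
  have hB' : B' ⟨A x, mem_range_self A x⟩ = B x := by
    simp [B', quotKerEquivRange_symm_apply_image]
  rw [← hB']
  exact B'.le_opNorm _

namespace MvPolynomial

theorem totalDegree_bind₁_le {σ τ R : Type*} [CommSemiring R] {f : σ → MvPolynomial τ R}
    {n : ℕ} (hf : ∀ i, (f i).totalDegree ≤ n) (p : MvPolynomial σ R) :
    (bind₁ f p).totalDegree ≤ p.totalDegree * n := by
  rw [bind₁, aeval_eq_eval₂Hom, coe_eval₂Hom, eval₂_eq]
  refine (totalDegree_finsetSum _ _).trans (Finset.sup_le fun ν hν => ?_)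
  refine (totalDegree_mul _ _).trans ?_
  rw [algebraMap_eq, totalDegree_C, zero_add]
  calc (∏ i ∈ ν.support, f i ^ ν i).totalDegree
      ≤ ∑ i ∈ ν.support, (f i ^ ν i).totalDegree := totalDegree_finsetProd _ _
    _ ≤ ∑ i ∈ ν.support, ν i * n :=
        Finset.sum_le_sum fun i _ => (totalDegree_pow _ _).trans (Nat.mul_le_mul_left _ (hf i))
    _ = (ν.sum fun _ e => e) * n := by rw [Finsupp.sum, Finset.sum_mul]
    _ ≤ p.totalDegree * n := Nat.mul_le_mul_right _ (le_totalDegree hν)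

theorem eval_bind₁ {σ τ R : Type*} [CommSemiring R] (f : σ → MvPolynomial τ R)
    (p : MvPolynomial σ R) (u : τ → R) : eval u (bind₁ f p) = eval (fun i => eval u (f i)) p := by
  rw [eval, eval₂Hom_bind₁]
  rfl

variable {ι : Type*} [Fintype ι] {S : Set (ι → ℝ)}

theorem exists_lipschitzOnWith_eval (p : MvPolynomial ι ℝ) (hS : IsBounded S) :
    ∃ K, LipschitzOnWith K (fun x => eval x p) S := by
  obtain ⟨r, hr⟩ := hS.subset_closedBall 0
  have hp : ContDiff ℝ 1 (fun x => eval x p) := (AnalyticOnNhd.eval_mvPolynomial p).contDiff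
  obtain ⟨K, hK⟩ := hp.contDiffOn.exists_lipschitzOnWith one_ne_zero (convex_closedBall 0 r)
    (isCompact_closedBall 0 r)
  exact ⟨K, hK.mono hr⟩

def evalSub (hS : IsBounded S) : MvPolynomial ι ℝ →ₗ[ℝ] lp (fun _ : S × S => ℝ) ∞ where
  toFun p := ⟨fun z => eval z.1 p - eval z.2 p, memℓp_infty <| by
    obtain ⟨K, hK⟩ := p.exists_lipschitzOnWith_eval hS
    refine ⟨K * Metric.diam S, forall_mem_range.2 fun z => ?_⟩
    exact (hK.dist_le_mul _ z.1.2 _ z.2.2).trans <| by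
      gcongr
      exact Metric.dist_le_diam_of_mem hS z.1.2 z.2.2⟩
  map_add' p q := by
    ext z
    simp only [map_add, lp.coeFn_add, Pi.add_apply]
    ring
  map_smul' c p := by
    ext z
    simp only [smul_eval, lp.coeFn_smul, Pi.smul_apply, smul_eq_mul, RingHom.id_apply]
    ring

/-- On the diagonal the slope is the junk value `0 / 0 = 0`. -/
def evalSlope (hS : IsBounded S) : MvPolynomial ι ℝ →ₗ[ℝ] lp (fun _ : S × S => ℝ) ∞ where
  toFun p := ⟨fun z => (eval z.1 p - eval z.2 p) / dist (z.1 : ι → ℝ) z.2, memℓp_infty <| by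
    obtain ⟨K, hK⟩ := p.exists_lipschitzOnWith_eval hS
    refine ⟨K, forall_mem_range.2 fun z => ?_⟩
    rw [norm_div, Real.norm_of_nonneg dist_nonneg]
    exact div_le_of_le_mul₀ dist_nonneg K.2 (hK.dist_le_mul _ z.1.2 _ z.2.2)⟩
  map_add' p q := by
    ext z
    simp only [map_add, lp.coeFn_add, Pi.add_apply]
    ring
  map_smul' c p := by
    ext z
    simp only [smul_eval, lp.coeFn_smul, Pi.smul_apply, smul_eq_mul, RingHom.id_apply]
    ring

theorem exists_abs_eval_sub_le_mul_dist (hS : IsBounded S) (d : ℕ) :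
    ∃ C ≥ 0, ∀ p ∈ restrictTotalDegree ι ℝ d, ∀ M : ℝ,
      (∀ x ∈ S, ∀ y ∈ S, |eval x p - eval y p| ≤ M) →
      ∀ x ∈ S, ∀ y ∈ S, |eval x p - eval y p| ≤ C * M * dist x y := by
  let E := restrictTotalDegree ι ℝ d
  obtain ⟨C, hC0, hC⟩ := LinearMap.exists_bound_of_ker_le (evalSub hS ∘ₗ E.subtype)
    (evalSlope hS ∘ₗ E.subtype) fun p hp => by
      rw [LinearMap.mem_ker] at hp ⊢
      ext z
      have hz : eval (z.1 : ι → ℝ) (p : MvPolynomial ι ℝ) - eval (z.2 : ι → ℝ) p = 0 :=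
        congr_arg (fun f : lp (fun _ : S × S => ℝ) ∞ => f z) hp
      simp [evalSlope, hz]
  refine ⟨C, hC0, fun p hp M hM x hx y hy => ?_⟩
  rcases eq_or_ne x y with rfl | hxy
  · simp
  have hA : ‖evalSub hS p‖ ≤ M := lp.norm_le_of_forall_le ((abs_nonneg _).trans (hM x hx x hx))
    fun z => hM _ z.1.2 _ z.2.2
  have hB : |(eval x p - eval y p) / dist x y| ≤ ‖evalSlope hS p‖ :=
    lp.norm_apply_le_norm ENNReal.top_ne_zero (evalSlope hS p) (⟨x, hx⟩, ⟨y, hy⟩)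
  rw [abs_div, abs_of_nonneg dist_nonneg, div_le_iff₀ (dist_pos.2 hxy)] at hB
  calc |eval x p - eval y p| ≤ ‖evalSlope hS p‖ * dist x y := hB
    _ ≤ C * ‖evalSub hS p‖ * dist x y := by gcongr; exact hC ⟨p, hp⟩
    _ ≤ C * M * dist x y := by gcongr

end MvPolynomial

section qnorm

variable {dd : ℕ} {Q : MvPolynomial (Fin dd) ℝ} {I : Set (Fin dd → ℝ)}

theorem qnorm_nonneg : 0 ≤ qnorm Q I :=
  Real.iSup_nonneg fun _ => Real.iSup_nonneg fun _ =>
    Real.iSup_nonneg fun _ => Real.iSup_nonneg fun _ => abs_nonneg _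

theorem qnorm_le {M : ℝ} (hM : 0 ≤ M) (h : ∀ x ∈ I, ∀ y ∈ I, |eval x Q - eval y Q| ≤ M) :
    qnorm Q I ≤ M :=
  Real.iSup_le (fun x => Real.iSup_le (fun hx => Real.iSup_le (fun y =>
    Real.iSup_le (fun hy => h x hx y hy) hM) hM) hM) hM

theorem abs_eval_sub_le_qnorm (hI : IsBounded I) {x y : Fin dd → ℝ} (hx : x ∈ I) (hy : y ∈ I) :
    |eval x Q - eval y Q| ≤ qnorm Q I := by
  obtain ⟨K, hK⟩ := Q.exists_lipschitzOnWith_eval hI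
  have hB : ∀ x ∈ I, ∀ y ∈ I, |eval x Q - eval y Q| ≤ K * Metric.diam I := fun x hx y hy =>
    (hK.dist_le_mul x hx y hy).trans (by gcongr; exact Metric.dist_le_diam_of_mem hI hx hy)
  have hB0 : 0 ≤ (K : ℝ) * Metric.diam I := by positivity
  have hinner : |eval x Q - eval y Q| ≤ ⨆ y' ∈ I, |eval x Q - eval y' Q| :=
    le_ciSup₂ (f := fun y' (_ : y' ∈ I) => |eval x Q - eval y' Q|)
      ⟨_, fun _ h => by obtain ⟨y', hy', rfl⟩ := mem_iUnion.1 h; exact hB x hx y' hy'⟩ y hy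
  exact hinner.trans <| le_ciSup₂ (f := fun x' (_ : x' ∈ I) => ⨆ y' ∈ I, |eval x' Q - eval y' Q|)
    ⟨_, fun _ h => by
      obtain ⟨x', hx', rfl⟩ := mem_iUnion.1 h
      exact Real.iSup_le (fun y' => Real.iSup_le (hB x' hx' y') hB0) hB0⟩ x hx

end qnorm

def unitCube (ι : Type*) : Set (ι → ℝ) := univ.pi fun _ => Ico 0 1

theorem isBounded_unitCube (ι : Type*) [Fintype ι] : IsBounded (unitCube ι) :=
  (Metric.isBounded_Icc (0 : ι → ℝ) 1).subset fun _ hx =>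
    ⟨fun i => (hx i trivial).1, fun i => (hx i trivial).2.le⟩

namespace DCube

variable {dd : ℕ} (α : Fin dd → ℕ) (D : ℕ) (J : DCube dd)

def chart (u : Fin dd → ℝ) : Fin dd → ℝ := fun i => (D : ℝ) ^ (J.s * (α i : ℤ)) * (J.k i + u i)

def rescale (Q : MvPolynomial (Fin dd) ℝ) : MvPolynomial (Fin dd) ℝ :=
  bind₁ (fun i => C ((D : ℝ) ^ (J.s * (α i : ℤ))) * (C (J.k i : ℝ) + X i)) Q

variable {α D J}

theorem eval_rescale (Q : MvPolynomial (Fin dd) ℝ) (u : Fin dd → ℝ) :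
    eval u (J.rescale α D Q) = eval (J.chart α D u) Q := by
  simp only [rescale, eval_bind₁, map_mul, map_add, map_intCast, eval_C, eval_X]
  rfl

theorem totalDegree_rescale_le (Q : MvPolynomial (Fin dd) ℝ) :
    (J.rescale α D Q).totalDegree ≤ Q.totalDegree := by
  refine (totalDegree_bind₁_le (fun i => ?_) Q).trans (Nat.mul_one _).le
  refine (totalDegree_mul _ _).trans ?_
  rw [totalDegree_C, zero_add]
  refine (totalDegree_add _ _).trans (max_le ?_ ?_)
  · rw [totalDegree_C]
    exact zero_le_one
  · rw [totalDegree_X]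

theorem isBounded_toSet : IsBounded (J.toSet α D) :=
  (Metric.isBounded_Icc (fun i => (D : ℝ) ^ (J.s * (α i : ℤ)) * J.k i)
    (fun i => (D : ℝ) ^ (J.s * (α i : ℤ)) * (J.k i + 1))).subset fun _ hx =>
      ⟨fun i => (hx i).1, fun i => (hx i).2.le⟩

theorem toSet_eq_image_chart (hD : 0 < D) : J.toSet α D = J.chart α D '' unitCube (Fin dd) := by
  have hℓ : ∀ i, (0 : ℝ) < (D : ℝ) ^ (J.s * (α i : ℤ)) := fun i => zpow_pos (by positivity) _
  ext x
  constructor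
  · intro hx
    refine ⟨fun i => x i / (D : ℝ) ^ (J.s * (α i : ℤ)) - J.k i, fun i _ => ?_, ?_⟩
    · rw [mem_Ico, sub_nonneg, sub_lt_iff_lt_add', le_div_iff₀ (hℓ i), div_lt_iff₀ (hℓ i)]
      exact ⟨by linarith [(hx i).1], by linarith [(hx i).2]⟩
    · ext i
      simp [chart, mul_div_cancel₀ _ (hℓ i).ne']
  · rintro ⟨u, hu, rfl⟩ i
    have := hu i trivial
    constructor <;> simp only [chart] <;> gcongr <;> linarith [this.1, this.2]

theorem dist_le_of_chart_mem (hα : ∀ i, 0 < α i) (hD : 1 ≤ D) {I : DCube dd}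
    (hs : J.s = I.s + 1) {u v : Fin dd → ℝ} (hu : J.chart α D u ∈ I.toSet α D)
    (hv : J.chart α D v ∈ I.toSet α D) : dist u v ≤ (D : ℝ)⁻¹ := by
  have hD1 : (1 : ℝ) ≤ D := by exact_mod_cast hD
  have hD0 : (0 : ℝ) < D := by linarith
  refine (dist_pi_le_iff (by positivity)).2 fun i => ?_
  have hℓ : (0 : ℝ) < D ^ (I.s * (α i : ℤ)) := zpow_pos hD0 _
  have hDα : (0 : ℝ) < D ^ α i := pow_pos hD0 _
  have hL : (D : ℝ) ^ (J.s * (α i : ℤ)) = D ^ (I.s * (α i : ℤ)) * D ^ α i := by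
    rw [hs, add_mul, one_mul, zpow_add₀ hD0.ne', zpow_natCast]
  obtain ⟨hu₁, hu₂⟩ := hu i
  obtain ⟨hv₁, hv₂⟩ := hv i
  simp only [chart, hL] at hu₁ hu₂ hv₁ hv₂
  have hdiff : |D ^ (I.s * (α i : ℤ)) * D ^ α i * (u i - v i)| < D ^ (I.s * (α i : ℤ)) :=
    abs_lt.2 ⟨by linarith, by linarith⟩
  rw [abs_mul, abs_of_pos (mul_pos hℓ hDα), mul_assoc, mul_lt_iff_lt_one_right hℓ] at hdiff
  rw [Real.dist_eq, ← one_div, le_div_iff₀ hD0]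
  calc |u i - v i| * D ≤ |u i - v i| * D ^ α i := by gcongr; exact le_self_pow₀ hD1 (hα i).ne'
    _ ≤ 1 := by rw [mul_comm]; exact hdiff.le

end DCube

open DCube in
theorem statement7_general (dd d : ℕ) (α : Fin dd → ℕ) (hα : ∀ i, 0 < α i) :
    ∃ D₀ : ℕ, ∀ D : ℕ, D₀ ≤ D → (∃ k : ℕ, D = 2 ^ k) →
      ∀ (I Ihat : DCube dd), I.valid α D → Ihat.valid α D →
        I.s < 0 → Ihat.s = I.s + 1 → I.toSet α D ⊆ Ihat.toSet α D →
        ∀ Q : MvPolynomial (Fin dd) ℝ, Q.totalDegree ≤ d →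
          10 ^ 4 * qnorm Q (I.toSet α D) ≤ qnorm Q (Ihat.toSet α D) := by
  obtain ⟨C, hC0, hC⟩ := exists_abs_eval_sub_le_mul_dist (isBounded_unitCube (Fin dd)) d
  refine ⟨max 1 ⌈10 ^ 4 * C⌉₊, fun D hD _ I Ihat _ _ _ hs hsub Q hQ => ?_⟩
  have hD1 : 1 ≤ D := le_of_max_le_left hD
  have hD0 : (0 : ℝ) < D := Nat.cast_pos.2 hD1
  have hDC : 10 ^ 4 * C ≤ D := (Nat.le_ceil _).trans (by exact_mod_cast le_of_max_le_right hD)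
  set M := qnorm Q (Ihat.toSet α D)
  have hM : 0 ≤ M := qnorm_nonneg
  have hchart := Ihat.toSet_eq_image_chart (α := α) hD1
  have hR : Ihat.rescale α D Q ∈ restrictTotalDegree (Fin dd) ℝ d :=
    (mem_restrictTotalDegree _ _ _).2 ((totalDegree_rescale_le Q).trans hQ)
  have hosc : ∀ u ∈ unitCube (Fin dd), ∀ v ∈ unitCube (Fin dd),
      |eval u (Ihat.rescale α D Q) - eval v (Ihat.rescale α D Q)| ≤ M := fun u hu v hv => by
    rw [eval_rescale, eval_rescale]
    exact abs_eval_sub_le_qnorm isBounded_toSet (hchart ▸ mem_image_of_mem _ hu)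
      (hchart ▸ mem_image_of_mem _ hv)
  suffices qnorm Q (I.toSet α D) ≤ M / 10 ^ 4 by linarith
  refine qnorm_le (by positivity) fun x hx y hy => ?_
  obtain ⟨u, hu, rfl⟩ := hchart ▸ hsub hx
  obtain ⟨v, hv, rfl⟩ := hchart ▸ hsub hy
  calc |eval (Ihat.chart α D u) Q - eval (Ihat.chart α D v) Q|
      = |eval u (Ihat.rescale α D Q) - eval v (Ihat.rescale α D Q)| := by
        rw [eval_rescale, eval_rescale]
    _ ≤ C * M * dist u v := hC _ hR M hosc u hu v hv
    _ ≤ C * M * (D : ℝ)⁻¹ := by gcongr; exact dist_le_of_chart_mem hα hD1 hs hx hy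
    _ ≤ M / 10 ^ 4 := by
        rw [mul_inv_le_iff₀ hD0, div_mul_eq_mul_div, le_div_iff₀ (by norm_num)]
        nlinarith [mul_le_mul_of_nonneg_right hDC hM]

theorem statement7 (dd d : ℕ) (α : Fin dd → ℕ) (hα : ∀ i, 0 < α i)
    (hmono : Monotone α) :
    ∃ D₀ : ℕ, ∀ D : ℕ, D₀ ≤ D → (∃ k : ℕ, D = 2 ^ k) →
      ∀ (I Ihat : DCube dd), I.valid α D → Ihat.valid α D →
        I.s < 0 → Ihat.s = I.s + 1 → I.toSet α D ⊆ Ihat.toSet α D →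
        ∀ Q : MvPolynomial (Fin dd) ℝ, Q.totalDegree ≤ d →
          10 ^ 4 * qnorm Q (I.toSet α D) ≤ qnorm Q (Ihat.toSet α D) :=
  statement7_general dd d α hα

end
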